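/- Let H be an infinite-dimensional Hilbert space and let Φ and Ψ be automorphisms of the Calkin algebra C(H) that agree on the corner ṗ C(H) ṗ for every projection p ∈ B(H) with separable range (where ṗ denotes the image of p in C(H)). Then Φ = Ψ. -/

import Mathlib

open ContinuousLinearMap

variable (H : Type*) [NormedAddCommGroup H] [InnerProductSpace ℂ H] [CompleteSpace H]

/-- The two-sided ideal of compact operators in `B(H)`. -/
noncomputable def compactIdeal : TwoSidedIdeal (H →L[ℂ] H) :=
  TwoSidedIdeal.mk' {a : H →L[ℂ] H | IsCompactOperator ⇑a}
    (by simpa using isCompactOperator_zero)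
    (fun hx hy => by simpa using hx.add hy)
    (fun hx => by simpa using hx.neg)
    (fun {x y} hy => by simpa [Function.comp] using hy.clm_comp x)
    (fun {x y} hx => by simpa [Function.comp] using hx.comp_clm y)

/-- The Calkin algebra `C(H) = B(H)/K(H)` (as a quotient ring). -/
def Calkin : Type _ := (compactIdeal H).ringCon.Quotient

noncomputable instance : Ring (Calkin H) :=
  inferInstanceAs (Ring (compactIdeal H).ringCon.Quotient)

/-- The quotient map `B(H) → C(H)`, `a ↦ ȧ`. -/
noncomputable def calkinMk : (H →L[ℂ] H) →+* Calkin H := (compactIdeal H).ringCon.mk'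

/-!
`Θ = Φ⁻¹ ∘ Ψ` fixes every element `ṗ x ṗ`, in particular `ṗ` itself, so
`ṗ Θ(z) ṗ = Θ(ṗ z ṗ) = ṗ z ṗ`.
Lifting `Θ(z) - z` to an operator `c`, every corner `p c p` with `p` a separable projection is
compact, and this forces `c` to be compact: a sequence `(x n)` in the unit ball and its image
`(c (x n))` both lie in the range of a single separable projection `p`, where `c` agrees with
`p c p`.
-/

open TopologicalSpace

theorem totallyBounded_of_forall_exists_cauchySeq_comp {X : Type*} [UniformSpace X] {S : Set X}
    (h : ∀ u : ℕ → X, (∀ n, u n ∈ S) → ∃ φ : ℕ → ℕ, StrictMono φ ∧ CauchySeq (u ∘ φ)) :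
    TotallyBounded S := by
  intro V hV
  by_contra! hS
  -- a `V`-separated sequence in `S`, which has no Cauchy subsequence
  obtain ⟨u, hu⟩ : ∃ u : ℕ → X, ∀ n, u n ∈ S ∧ ∀ y ∈ u '' Set.Iio n, (u n, y) ∉ V :=
    Set.seq_of_forall_finite_exists (P := fun x t => x ∈ S ∧ ∀ y ∈ t, (x, y) ∉ V)
      fun t ht => by simpa [Set.not_subset] using hS t ht
  obtain ⟨φ, hφ, hcauchy⟩ := h u fun n => (hu n).1
  obtain ⟨N, hN⟩ := hcauchy.mem_entourage hV
  exact (hu (φ (N + 1))).2 _ ⟨φ N, hφ N.lt_succ_self, rfl⟩ (hN _ _ N.le_succ le_rfl)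

theorem exists_separable_starProjection_fixing {𝕜 E : Type*} [RCLike 𝕜]
    [NormedAddCommGroup E] [InnerProductSpace 𝕜 E] [CompleteSpace E] {s : Set E}
    (hs : s.Countable) :
    ∃ p : E →L[𝕜] E, p ∘L p = p ∧ adjoint p = p ∧ IsSeparable (Set.range p) ∧
      ∀ x ∈ s, p x = x := by
  set K := (Submodule.span 𝕜 s).topologicalClosure
  have hrange : Set.range K.starProjection = K := congrArg SetLike.coe K.range_starProjection
  refine ⟨K.starProjection, K.isIdempotentElem_starProjection, ?_, ?_, fun x hx => ?_⟩
  · rw [← star_eq_adjoint]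
    exact isSelfAdjoint_starProjection K
  · rw [hrange, Submodule.topologicalClosure_coe]
    exact hs.isSeparable.span.closure
  · exact Submodule.starProjection_eq_self_iff.mpr
      (Submodule.le_topologicalClosure _ (Submodule.subset_span hx))

theorem isCompactOperator_of_forall_separable_corner {𝕜 E : Type*} [RCLike 𝕜]
    [NormedAddCommGroup E] [InnerProductSpace 𝕜 E] [CompleteSpace E] (c : E →L[𝕜] E)
    (h : ∀ p : E →L[𝕜] E, p ∘L p = p → adjoint p = p → IsSeparable (Set.range p) →
      IsCompactOperator (p ∘L c ∘L p)) :
    IsCompactOperator c := by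
  refine (isCompactOperator_iff_isCompact_closure_image_closedBall (c : E →ₗ[𝕜] E)
    one_pos).mpr ((totallyBounded_of_forall_exists_cauchySeq_comp fun u hu => ?_).closure
      |>.isCompact_of_isClosed isClosed_closure)
  choose x hx hcx using hu
  obtain ⟨p, hpp, hpadj, hpsep, hpfix⟩ :=
    exists_separable_starProjection_fixing (𝕜 := 𝕜) ((Set.countable_range x).union
      (Set.countable_range (c ∘ x)))
  have hcorner : ∀ n, (p ∘L c ∘L p) (x n) = u n := fun n => by
    rw [comp_apply, comp_apply, hpfix (x n) (.inl ⟨n, rfl⟩), hpfix (c (x n)) (.inr ⟨n, rfl⟩),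
      ← hcx, coe_coe]
  obtain ⟨_, -, φ, hφ, hlim⟩ := ((h p hpp hpadj hpsep).isCompact_closure_image_closedBall 1
    ).isSeqCompact fun n => subset_closure ⟨x n, hx n, hcorner n⟩
  exact ⟨φ, hφ, hlim.cauchySeq⟩

theorem mul_map_mul_eq_of_map_corner_eq {M F : Type*} [Semigroup M] [FunLike F M M]
    [MulHomClass F M M] (f : F) {p : M} (hp : IsIdempotentElem p)
    (hf : ∀ x, f (p * x * p) = p * x * p) (z : M) :
    p * f z * p = p * z * p := by
  have hfp : f p = p := by simpa only [hp.eq, hp.mul_self_mul] using hf p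
  rw [← hf z, map_mul, map_mul, hfp]

theorem calkinMk_eq_calkinMk_iff {H : Type*} [NormedAddCommGroup H] [InnerProductSpace ℂ H]
    {a b : H →L[ℂ] H} :
    calkinMk H a = calkinMk H b ↔ IsCompactOperator (a - b) :=
  (RingCon.eq _).trans <|
    ((compactIdeal H).rel_iff _ _).trans (TwoSidedIdeal.mem_mk' _ _ _ _ _ _ _)

theorem calkinMk_surjective {H : Type*} [NormedAddCommGroup H] [InnerProductSpace ℂ H] :
    Function.Surjective (calkinMk H) :=
  RingCon.mk'_surjective _

theorem Calkin.eq_of_forall_separable_corner_eq {H : Type*} [NormedAddCommGroup H]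
    [InnerProductSpace ℂ H] [CompleteSpace H] {x y : Calkin H}
    (h : ∀ p : H →L[ℂ] H, p ∘L p = p → adjoint p = p → IsSeparable (Set.range p) →
      calkinMk H p * x * calkinMk H p = calkinMk H p * y * calkinMk H p) :
    x = y := by
  obtain ⟨a, rfl⟩ := calkinMk_surjective x
  obtain ⟨b, rfl⟩ := calkinMk_surjective y
  refine calkinMk_eq_calkinMk_iff.mpr (isCompactOperator_of_forall_separable_corner _
    fun p hpp hpadj hpsep => ?_)
  have hcorner := h p hpp hpadj hpsep
  rwa [← map_mul, ← map_mul, ← map_mul, ← map_mul, calkinMk_eq_calkinMk_iff, ← sub_mul,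
    ← mul_sub] at hcorner

theorem calkin_aut_eq_of_eq_on_separable_corners_general
    {H : Type*} [NormedAddCommGroup H] [InnerProductSpace ℂ H] [CompleteSpace H]
    (Φ Ψ : Calkin H ≃+* Calkin H)
    (h : ∀ p : H →L[ℂ] H, p ∘L p = p → adjoint p = p →
      TopologicalSpace.IsSeparable (Set.range ⇑p) →
      ∀ x : Calkin H, Φ (calkinMk H p * x * calkinMk H p) = Ψ (calkinMk H p * x * calkinMk H p)) :
    Φ = Ψ := by
  have hfix : ∀ z, Φ.symm (Ψ z) = z := fun z =>
    Calkin.eq_of_forall_separable_corner_eq fun p hpp hpadj hpsep =>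
      mul_map_mul_eq_of_map_corner_eq (Ψ.trans Φ.symm)
        ((show IsIdempotentElem p from hpp).map (calkinMk H))
        (fun x => Φ.symm_apply_eq.mpr (h p hpp hpadj hpsep x).symm) z
  ext z
  exact (Φ.symm_apply_eq.mp (hfix z)).symm

/-- two automorphisms of the Calkin algebra of an infinite-dimensional Hilbert
space agreeing on the corner `ṗ C(H) ṗ` for every projection `p` with separable range are
equal. -/
theorem calkin_aut_eq_of_eq_on_separable_corners
    {H : Type*} [NormedAddCommGroup H] [InnerProductSpace ℂ H] [CompleteSpace H]
    (hinf : ¬ FiniteDimensional ℂ H)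
    (Φ Ψ : Calkin H ≃+* Calkin H)
    (h : ∀ p : H →L[ℂ] H, p ∘L p = p → adjoint p = p →
      TopologicalSpace.IsSeparable (Set.range ⇑p) →
      ∀ x : Calkin H, Φ (calkinMk H p * x * calkinMk H p) = Ψ (calkinMk H p * x * calkinMk H p)) :
    Φ = Ψ :=
  calkin_aut_eq_of_eq_on_separable_corners_general Φ Ψ h
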